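/- The Gaussian mechanism M(d) = f(d) + N(0, σ²I) in one dimension with noise scale σ > C·√(2 log(1.25/δ))/ε, where C = sup over adjacent d, d' of |f(d) - f(d')| and 0 < ε ≤ 1, satisfies (ε, δ)-differential privacy: for all adjacent d, d' and all measurable S, Pr[M(d) ∈ S] ≤ e^ε Pr[M(d') ∈ S] + δ. -/

import Mathlib

open MeasureTheory ProbabilityTheory Set Real
open scoped NNReal ENNReal

/-!
The density ratio of `N(μ, v)` to `N(μ', v)` at `x` is `exp (((x - μ')² - (x - μ)²) / (2v))`.
When `|μ - μ'| ≤ C` it exceeds `e^ε` only on a half-line whose `N(μ, v)`-mass is the tail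
`P(Z > vε/C - C/2)` of `Z ~ N(0, v)`, so `P(M d ∈ S) ≤ e^ε P(M d' ∈ S) + P(Z > vε/C - C/2)`.
For `v = σ²` with `σ > C s / ε`, `s = √(2 log (1.25/δ))` and `ε ≤ 1`, that threshold is at least
`σ (s - 1/(2s))`, and the bound `P(Z > σ r) ≤ e^{-r²/2} / 2` for `r ≥ 0` makes the tail at most
`1.25 e^{-s²/2} = δ`. When `s - 1/(2s) < 0`, `δ > 1.25 e^{-1/4}` is so close to `1` that bounding
the density by `1/√(2π)` suffices.
-/

section WithDensity

variable {α : Type*} [MeasurableSpace α] {μ : Measure α} [SFinite μ] {f g : α → ℝ≥0∞}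
  {c : ℝ≥0∞}

lemma withDensity_apply_le_const_mul (hg : Measurable g) {s : Set α}
    (h : ∀ x ∈ s, f x ≤ c * g x) : μ.withDensity f s ≤ c * μ.withDensity g s := by
  rw [withDensity_apply', withDensity_apply', ← lintegral_const_mul c hg]
  exact setLIntegral_mono (hg.const_mul c) h

lemma withDensity_apply_le_const_mul_add (hg : Measurable g) {B : Set α}
    (h : ∀ x ∉ B, f x ≤ c * g x) (s : Set α) :
    μ.withDensity f s ≤ c * μ.withDensity g s + μ.withDensity f B :=
  calc μ.withDensity f s ≤ μ.withDensity f (s \ B) + μ.withDensity f (s ∩ B) := by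
        rw [add_comm]; exact measure_le_inter_add_sdiff _ s B
    _ ≤ c * μ.withDensity g s + μ.withDensity f B := by
        gcongr
        · exact (withDensity_apply_le_const_mul hg fun x hx ↦ h x hx.2).trans
            (by gcongr; exact sdiff_subset)
        · exact inter_subset_right

end WithDensity

section Gaussian

lemma gaussianPDFReal_eq_exp_mul_gaussianPDFReal (μ μ' : ℝ) (v : ℝ≥0) (x : ℝ) :
    gaussianPDFReal μ v x
      = exp (((x - μ') ^ 2 - (x - μ) ^ 2) / (2 * v)) * gaussianPDFReal μ' v x := by
  simp only [gaussianPDFReal]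
  rw [mul_left_comm, ← exp_add]
  ring_nf

lemma gaussianPDFReal_le_inv_sqrt (μ : ℝ) (v : ℝ≥0) (x : ℝ) :
    gaussianPDFReal μ v x ≤ (√(2 * π * v))⁻¹ := by
  rw [gaussianPDFReal]
  refine mul_le_of_le_one_right (by positivity) (exp_le_one_iff.2 ?_)
  exact div_nonpos_of_nonpos_of_nonneg (neg_nonpos.2 (sq_nonneg _)) (by positivity)

variable {μ : ℝ} {v : ℝ≥0}

lemma gaussianPDF_le_exp_mul_gaussianPDF {μ' x ε : ℝ} (hv : v ≠ 0)
    (h : (x - μ') ^ 2 - (x - μ) ^ 2 ≤ 2 * v * ε) :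
    gaussianPDF μ v x ≤ ENNReal.ofReal (exp ε) * gaussianPDF μ' v x := by
  have h2v : (0 : ℝ) < 2 * v := by positivity
  rw [gaussianPDF, gaussianPDF, ← ENNReal.ofReal_mul (exp_nonneg ε),
    gaussianPDFReal_eq_exp_mul_gaussianPDFReal μ μ']
  gcongr
  · exact gaussianPDFReal_nonneg _ _ _
  · rwa [div_le_iff₀' h2v]

lemma gaussianReal_Ioi_self (hv : v ≠ 0) : gaussianReal μ v (Ioi μ) = 2⁻¹ := by
  have := nullSingletonClass_gaussianReal (μ := μ) hv
  have hsymm : gaussianReal μ v (Iic μ) = gaussianReal μ v (Ioi μ) := by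
    have hreflect : (gaussianReal μ v).map (2 * μ - ·) = gaussianReal μ v := by
      rw [gaussianReal_map_const_sub]; ring_nf
    rw [← measure_congr Iio_ae_eq_Iic]
    conv_lhs => rw [← hreflect, Measure.map_apply (by fun_prop) measurableSet_Iio]
    congr 1
    ext x
    simp only [mem_preimage, mem_Iio, mem_Ioi]
    constructor <;> intro h <;> linarith
  refine ENNReal.eq_inv_of_mul_eq_one_left ?_
  rw [mul_two, ← measure_univ (μ := gaussianReal μ v),
    ← measure_add_measure_compl measurableSet_Ioi, compl_Ioi, hsymm]

lemma gaussianReal_Ioi_le_exp (hv : v ≠ 0) {t : ℝ} (ht : 0 ≤ t) :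
    gaussianReal 0 v (Ioi t) ≤ ENNReal.ofReal (exp (-t ^ 2 / (2 * v)) / 2) := by
  -- Comparing with `N(t, v)` rather than using a Chernoff bound gains the factor `1/2`.
  calc gaussianReal 0 v (Ioi t)
      ≤ ENNReal.ofReal (exp (-t ^ 2 / (2 * v))) * gaussianReal t v (Ioi t) := by
        rw [gaussianReal_of_var_ne_zero _ hv, gaussianReal_of_var_ne_zero _ hv]
        refine withDensity_apply_le_const_mul (measurable_gaussianPDF _ _) fun x hx ↦ ?_
        refine gaussianPDF_le_exp_mul_gaussianPDF hv ?_
        have htx : t ≤ x := le_of_lt hx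
        field_simp
        nlinarith
    _ = ENNReal.ofReal (exp (-t ^ 2 / (2 * v)) / 2) := by
        rw [gaussianReal_Ioi_self hv, ENNReal.ofReal_div_of_pos two_pos, ENNReal.ofReal_ofNat]
        exact (div_eq_mul_inv _ _).symm

lemma gaussianReal_Ioi_le_of_nonpos (hv : v ≠ 0) {t : ℝ} (ht : t ≤ 0) :
    gaussianReal 0 v (Ioi t) ≤ ENNReal.ofReal (1 / 2 - t / √(2 * π * v)) := by
  have hdensity : ∀ x ∈ Ioc t 0, gaussianPDF 0 v x ≤ ENNReal.ofReal (√(2 * π * v))⁻¹ * 1 :=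
    fun x _ ↦ by rw [mul_one]; exact ENNReal.ofReal_le_ofReal (gaussianPDFReal_le_inv_sqrt 0 v x)
  calc gaussianReal 0 v (Ioi t)
      ≤ gaussianReal 0 v (Ioc t 0) + gaussianReal 0 v (Ioi 0) := by
        rw [← Ioc_union_Ioi_eq_Ioi ht]; exact measure_union_le _ _
    _ ≤ ENNReal.ofReal (√(2 * π * v))⁻¹ * volume (Ioc t 0) + 2⁻¹ := by
        rw [gaussianReal_Ioi_self hv]
        gcongr
        rw [gaussianReal_of_var_ne_zero _ hv]
        simpa using withDensity_apply_le_const_mul (μ := volume) measurable_one hdensity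
    _ = ENNReal.ofReal (1 / 2 - t / √(2 * π * v)) := by
        rw [Real.volume_Ioc, ← ENNReal.ofReal_mul (by positivity),
          show (2⁻¹ : ℝ≥0∞) = ENNReal.ofReal (1 / 2) by simp,
          ← ENNReal.ofReal_add (mul_nonneg (by positivity) (by linarith)) (by norm_num)]
        congr 1
        ring

lemma gaussianReal_map_mul_sub_self {s : ℝ} (hs : s ^ 2 = 1) :
    (gaussianReal μ v).map (fun x ↦ s * (x - μ)) = gaussianReal 0 v := by
  have hcomp : (fun x ↦ s * (x - μ)) = (s * ·) ∘ (· - μ) := rfl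
  rw [hcomp, ← Measure.map_map (by fun_prop) (by fun_prop), gaussianReal_map_sub_const,
    gaussianReal_map_const_mul, sub_self, mul_zero]
  congr
  rw [← NNReal.coe_inj]
  simp [hs]

lemma gaussianReal_Ioi_mul {σ : ℝ} (hσ : 0 < σ) (r : ℝ) :
    gaussianReal 0 (σ ^ 2).toNNReal (Ioi (σ * r)) = gaussianReal 0 1 (Ioi r) := by
  have hscale : (gaussianReal 0 1).map (σ * ·) = gaussianReal 0 (σ ^ 2).toNNReal := by
    rw [gaussianReal_map_const_mul, mul_zero, mul_one]
    congr
    exact (max_eq_left (sq_nonneg σ)).symm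
  rw [← hscale, Measure.map_apply (by fun_prop) measurableSet_Ioi]
  congr 1
  ext x
  simp [mul_lt_mul_iff_right₀ hσ]

lemma gaussianReal_apply_le_exp_mul_add {μ' C ε : ℝ} (hv : v ≠ 0) (hε : 0 ≤ ε) (hC : 0 < C)
    (hμ : |μ - μ'| ≤ C) (S : Set ℝ) :
    gaussianReal μ v S ≤ ENNReal.ofReal (exp ε) * gaussianReal μ' v S
      + gaussianReal 0 v (Ioi (v * ε / C - C / 2)) := by
  obtain ⟨s, hs, hsign⟩ : ∃ s : ℝ, s ^ 2 = 1 ∧ s * (μ - μ') = |μ - μ'| := by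
    rcases abs_choice (μ - μ') with h | h
    · exact ⟨1, one_pow 2, by rw [h, one_mul]⟩
    · exact ⟨-1, by norm_num, by rw [h, neg_one_mul]⟩
  -- `s` is the sign of `μ - μ'`; off `B` the privacy loss is at most `ε`.
  set B := (fun x ↦ s * (x - μ)) ⁻¹' Ioi (v * ε / C - C / 2)
  have hB : gaussianReal μ v B = gaussianReal 0 v (Ioi (v * ε / C - C / 2)) := by
    rw [← gaussianReal_map_mul_sub_self (μ := μ) hs,
      Measure.map_apply (by fun_prop) measurableSet_Ioi]
  rw [← hB, gaussianReal_of_var_ne_zero _ hv, gaussianReal_of_var_ne_zero _ hv]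
  refine withDensity_apply_le_const_mul_add (measurable_gaussianPDF _ _)
    (fun x hx ↦ gaussianPDF_le_exp_mul_gaussianPDF hv ?_) S
  simp only [B, mem_preimage, mem_Ioi, not_lt] at hx
  have hloss : (x - μ') ^ 2 - (x - μ) ^ 2 = |μ - μ'| * (2 * (s * (x - μ)) + |μ - μ'|) := by
    rw [← hsign]; linear_combination (-(2 * (μ - μ') * (x - μ) + (μ - μ') ^ 2)) * hs
  have hw : v * ε / C * C = v * ε := div_mul_cancel₀ _ hC.ne'
  have hw0 : 0 ≤ v * ε / C := by positivity
  rw [hloss]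
  generalize v * ε / C = w at hx hw hw0
  nlinarith [mul_le_mul_of_nonneg_left hx (abs_nonneg (μ - μ')),
    mul_nonneg (abs_nonneg (μ - μ')) (sub_nonneg.2 hμ), mul_nonneg hw0 (sub_nonneg.2 hμ)]

end Gaussian

lemma gaussianReal_zero_one_Ioi_sub_le {s : ℝ} (hs0 : 0 < s) (hs : 2 / 5 ≤ s ^ 2) :
    gaussianReal 0 1 (Ioi (s - 1 / (2 * s))) ≤ ENNReal.ofReal (1.25 * exp (-s ^ 2 / 2)) := by
  have hinv : s * (1 / (2 * s)) = 1 / 2 := by field_simp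
  rcases le_or_gt 0 (s - 1 / (2 * s)) with hr | hr
  · refine (gaussianReal_Ioi_le_exp one_ne_zero hr).trans (ENNReal.ofReal_le_ofReal ?_)
    have hr2 : s ^ 2 - 1 ≤ (s - 1 / (2 * s)) ^ 2 := by nlinarith [sq_nonneg (1 / (2 * s))]
    have hexp_half : exp (1 / 2) ≤ 5 / 2 := by
      have : exp (1 / 2) * exp (1 / 2) = exp 1 := by rw [← exp_add]; norm_num
      nlinarith [exp_one_lt_d9, exp_pos (1 / 2)]
    calc exp (-(s - 1 / (2 * s)) ^ 2 / (2 * ((1 : ℝ≥0) : ℝ))) / 2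
        ≤ exp (1 / 2 + -s ^ 2 / 2) / 2 := by gcongr; push_cast; linarith
      _ = exp (1 / 2) * exp (-s ^ 2 / 2) / 2 := by rw [exp_add]
      _ ≤ 5 / 2 * exp (-s ^ 2 / 2) / 2 := by gcongr
      _ = 1.25 * exp (-s ^ 2 / 2) := by ring
  · refine (gaussianReal_Ioi_le_of_nonpos one_ne_zero hr.le).trans (ENNReal.ofReal_le_ofReal ?_)
    have hs2 : s ^ 2 < 1 / 2 := by nlinarith
    have hexp : 3 / 4 ≤ exp (-s ^ 2 / 2) := by linarith [add_one_le_exp (-s ^ 2 / 2)]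
    have hsqrt : 2 ≤ √(2 * π * ((1 : ℝ≥0) : ℝ)) := by
      rw [Real.le_sqrt zero_le_two (by positivity)]; push_cast; linarith [pi_gt_three]
    have hs35 : 3 / 5 ≤ s := by nlinarith
    have hr56 : -(s - 1 / (2 * s)) ≤ 5 / 6 := by
      have : 1 / (2 * s) ≤ 5 / 6 := by rw [div_le_iff₀ (by positivity)]; linarith
      linarith
    have hratio : -(s - 1 / (2 * s)) / √(2 * π * ((1 : ℝ≥0) : ℝ)) ≤ 5 / 6 / 2 :=
      div_le_div₀ (by norm_num) hr56 two_pos hsqrt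
    rw [neg_div] at hratio
    linarith

lemma gaussianReal_Ioi_le_of_noise_scale {C ε δ σ : ℝ} (hC : 0 < C) (hε0 : 0 < ε) (hε1 : ε ≤ 1)
    (hδ0 : 0 < δ) (hδ1 : δ < 1) (hσ : C * √(2 * log (1.25 / δ)) / ε < σ) :
    gaussianReal 0 (σ ^ 2).toNNReal (Ioi ((σ ^ 2).toNNReal * ε / C - C / 2))
      ≤ ENNReal.ofReal δ := by
  set s := √(2 * log (1.25 / δ))
  have hlog : 1 / 5 < log (1.25 / δ) := by
    have h1 : 1 - 1.25⁻¹ ≤ log 1.25 := one_sub_inv_le_log_of_pos (by norm_num)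
    have h2 : log 1.25 < log (1.25 / δ) :=
      log_lt_log (by norm_num) (by rw [lt_div_iff₀ hδ0]; linarith)
    norm_num at h1; linarith
  have hs2 : s ^ 2 = 2 * log (1.25 / δ) := sq_sqrt (by linarith)
  have hs0 : 0 < s := sqrt_pos.2 (by linarith)
  have hσ0 : 0 < σ := lt_of_le_of_lt (by positivity) hσ
  have hCs : C * s < σ * ε := (div_lt_iff₀ hε0).1 hσ
  have hthreshold : σ * (s - 1 / (2 * s)) ≤ (σ ^ 2).toNNReal * ε / C - C / 2 := by
    rw [coe_toNNReal _ (sq_nonneg σ)]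
    have h1 : σ * s ≤ σ ^ 2 * ε / C := by rw [le_div_iff₀ hC]; nlinarith
    have h2 : C / 2 ≤ σ * (1 / (2 * s)) := by
      rw [mul_one_div, div_le_div_iff₀ two_pos (by positivity)]; nlinarith
    linarith
  calc gaussianReal 0 (σ ^ 2).toNNReal (Ioi ((σ ^ 2).toNNReal * ε / C - C / 2))
      ≤ gaussianReal 0 1 (Ioi (s - 1 / (2 * s))) := by
        rw [← gaussianReal_Ioi_mul hσ0]
        exact measure_mono (Ioi_subset_Ioi hthreshold)
    _ ≤ ENNReal.ofReal (1.25 * exp (-s ^ 2 / 2)) :=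
        gaussianReal_zero_one_Ioi_sub_le hs0 (by linarith)
    _ = ENNReal.ofReal δ := by
        rw [hs2, neg_div, mul_div_cancel_left₀ _ two_ne_zero, exp_neg, exp_log (by positivity)]
        field_simp

theorem gaussian_mechanism_dp_general
    {D : Type*} (Adj : D → D → Prop) (f : D → ℝ)
    (C ε δ σ : ℝ)
    (hC : ∀ d d', Adj d d' → |f d - f d'| ≤ C)
    (hε0 : 0 < ε) (hε1 : ε ≤ 1) (hδ0 : 0 < δ) (hδ1 : δ < 1)
    (hσ : C * Real.sqrt (2 * Real.log (1.25 / δ)) / ε < σ) :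
    ∀ d d', Adj d d' → ∀ S : Set ℝ, MeasurableSet S →
      gaussianReal (f d) (Real.toNNReal (σ ^ 2)) S
        ≤ ENNReal.ofReal (Real.exp ε) * gaussianReal (f d') (Real.toNNReal (σ ^ 2)) S
          + ENNReal.ofReal δ := by
  intro d d' hadj S _
  have hdd' := hC d d' hadj
  rcases ((abs_nonneg _).trans hdd').eq_or_lt with rfl | hC0
  · rw [sub_eq_zero.1 (abs_nonpos_iff.1 hdd')]
    exact le_add_right (le_mul_of_one_le_left' (ENNReal.one_le_ofReal.2 (one_le_exp hε0.le)))
  have hσ0 : 0 < σ := lt_of_le_of_lt (by positivity) hσ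
  calc gaussianReal (f d) (σ ^ 2).toNNReal S
      ≤ ENNReal.ofReal (exp ε) * gaussianReal (f d') (σ ^ 2).toNNReal S
          + gaussianReal 0 (σ ^ 2).toNNReal (Ioi ((σ ^ 2).toNNReal * ε / C - C / 2)) :=
        gaussianReal_apply_le_exp_mul_add (toNNReal_pos.2 (by positivity)).ne' hε0.le hC0 hdd' S
    _ ≤ ENNReal.ofReal (exp ε) * gaussianReal (f d') (σ ^ 2).toNNReal S + ENNReal.ofReal δ := by
        gcongr
        exact gaussianReal_Ioi_le_of_noise_scale hC0 hε0 hε1 hδ0 hδ1 hσ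

/-- The one-dimensional Gaussian mechanism `M(d) = f(d) + N(0, σ²)`
with noise scale `σ > C·√(2 log(1.25/δ))/ε`, where `C` bounds `|f(d) - f(d')|` over
adjacent `d, d'` and `0 < ε ≤ 1`, satisfies `(ε, δ)`-differential privacy: for all
adjacent `d, d'` and all measurable `S`,
`Pr[M(d) ∈ S] ≤ e^ε Pr[M(d') ∈ S] + δ`.  (The law of `M(d)` is `N(f(d), σ²)`.) -/
theorem gaussian_mechanism_dp
    {D : Type*} (Adj : D → D → Prop) (f : D → ℝ)
    (C ε δ σ : ℝ)
    (hC : ∀ d d', Adj d d' → |f d - f d'| ≤ C)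
    (hε0 : 0 < ε) (hε1 : ε ≤ 1) (hδ0 : 0 < δ) (hδ1 : δ < 1)
    (hσ0 : 0 < σ)
    (hσ : C * Real.sqrt (2 * Real.log (1.25 / δ)) / ε < σ) :
    ∀ d d', Adj d d' → ∀ S : Set ℝ, MeasurableSet S →
      gaussianReal (f d) (Real.toNNReal (σ ^ 2)) S
        ≤ ENNReal.ofReal (Real.exp ε) * gaussianReal (f d') (Real.toNNReal (σ ^ 2)) S
          + ENNReal.ofReal δ :=
  gaussian_mechanism_dp_general Adj f C ε δ σ hC hε0 hε1 hδ0 hδ1 hσ
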